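/- Let à = A₀ + εA₁ + ε*A₂ + εε*A₃ be a hyper-dual matrix whose hyper-dual group inverse Ã^# exists (equivalently: A₀^# exists, (I−A₀A₀^#)A₁(I−A₀A₀^#) = 0, (I−A₀A₀^#)A₂(I−A₀A₀^#) = 0, and A₃ = A₁A₀^#A₂ + A₂A₀^#A₁). Then R(Ã) ∩ N(Ã) = {0}, where R(Ã) = {Ãz̃ : z̃ hyper-dual vector} and N(Ã) = {w̃ : Ãw̃ = 0}. -/

import Mathlib

abbrev Mat (n : ℕ) := Matrix (Fin n) (Fin n) ℝ
abbrev DMat (n : ℕ) := DualNumber (Mat n)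
abbrev HMat (n : ℕ) := DualNumber (DMat n)
abbrev DVec (n : ℕ) := DualNumber (Fin n → ℝ)
abbrev HVec (n : ℕ) := DualNumber (DVec n)

/-- `g` is a group inverse of `a`. -/
def IsGroupInv {R : Type*} [Mul R] (a g : R) : Prop :=
  a * g * a = a ∧ g * a * g = g ∧ a * g = g * a

/-- A dual matrix acting on a dual vector. -/
def dmulVec {n : ℕ} (A : DMat n) (x : DVec n) : DVec n :=
  ⟨A.fst.mulVec x.fst, A.fst.mulVec x.snd + A.snd.mulVec x.fst⟩

/-- A hyper-dual matrix acting on a hyper-dual vector. -/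
def hmulVec {n : ℕ} (A : HMat n) (x : HVec n) : HVec n :=
  ⟨dmulVec A.fst x.fst, dmulVec A.fst x.snd + dmulVec A.snd x.fst⟩

/-!
Since `Ã G̃ = G̃ Ã`, a group inverse gives `Ã = G̃ Ã²`. The action of hyper-dual matrices on
hyper-dual vectors is multiplicative, so for `w̃ = Ã z̃` with `Ã w̃ = 0` we get
`w̃ = G̃ (Ã (Ã z̃)) = G̃ 0 = 0`.
-/

theorem IsGroupInv.mul_mul_self {R : Type*} [Semigroup R] {a g : R} (h : IsGroupInv a g) :
    g * (a * a) = a := by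
  rw [← mul_assoc, ← h.2.2, h.1]

section
variable {n : ℕ}

open TrivSqZeroExt

theorem dmulVec_zero (A : DMat n) : dmulVec A 0 = 0 := by
  refine ext ?_ ?_ <;> simp [dmulVec]

theorem dmulVec_add (A : DMat n) (x y : DVec n) :
    dmulVec A (x + y) = dmulVec A x + dmulVec A y := by
  -- `fst_add` must fire before `dmulVec` is unfolded into pairs, whose sums it no longer matches.
  refine ext ?_ ?_ <;> simp only [fst_add, snd_add] <;>
    simp only [dmulVec, fst_mk, snd_mk, fst_add, snd_add, Matrix.mulVec_add, add_add_add_comm]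

theorem add_dmulVec (A B : DMat n) (x : DVec n) :
    dmulVec (A + B) x = dmulVec A x + dmulVec B x := by
  refine ext ?_ ?_ <;> simp only [fst_add, snd_add] <;>
    simp only [dmulVec, fst_mk, snd_mk, fst_add, snd_add, Matrix.add_mulVec, add_add_add_comm]

theorem dmulVec_mul (A B : DMat n) (x : DVec n) :
    dmulVec (A * B) x = dmulVec A (dmulVec B x) := by
  refine ext ?_ ?_ <;> simp only [dmulVec, fst_mk, snd_mk, fst_mul, DualNumber.snd_mul,
    Matrix.add_mulVec, Matrix.mulVec_add, Matrix.mulVec_mulVec]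
  abel

theorem hmulVec_zero (A : HMat n) : hmulVec A 0 = 0 := by
  refine ext ?_ ?_ <;> simp [hmulVec, dmulVec_zero]

theorem hmulVec_mul (A B : HMat n) (x : HVec n) :
    hmulVec (A * B) x = hmulVec A (hmulVec B x) := by
  refine ext ?_ ?_ <;> simp only [hmulVec, fst_mk, snd_mk, fst_mul, DualNumber.snd_mul,
    dmulVec_mul, dmulVec_add, add_dmulVec]
  abel

end

/-- When the HDGGI exists, the range and null space of $\tilde A$ intersect trivially. -/
theorem hdggi_range_inter_null (n : ℕ) (At G : HMat n) (hG : IsGroupInv At G)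
    (w : HVec n) (hw : ∃ z : HVec n, w = hmulVec At z) (hw0 : hmulVec At w = 0) :
    w = 0 := by
  obtain ⟨z, rfl⟩ := hw
  calc hmulVec At z = hmulVec (G * (At * At)) z := by rw [hG.mul_mul_self]
    _ = hmulVec G (hmulVec At (hmulVec At z)) := by rw [hmulVec_mul, hmulVec_mul]
    _ = 0 := by rw [hw0, hmulVec_zero]
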